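/- Every homogeneous ½-derivation of the planar Galilean conformal algebra W of degree (1̄,0̄,γ) is zero, for every γ ∈ ℤ. -/

import Mathlib

/-- Index type for the basis of the planar Galilean conformal algebra. -/
inductive PGIdx : Type
  | L (m : ℤ) | H (m : ℤ) | I (m : ℤ) | J (m : ℤ)

open PGIdx in
/-- `W` together with a basis `b` satisfying these relations is
the planar Galilean conformal algebra. -/
def IsPlanarGCA (W : Type*) [LieRing W] [LieAlgebra ℂ W]
    (b : Module.Basis PGIdx ℂ W) : Prop :=
  ∀ m n : ℤ,
    ⁅b (L m), b (L n)⁆ = ((m - n : ℤ) : ℂ) • b (L (m + n)) ∧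
    ⁅b (L m), b (H n)⁆ = (-(n : ℂ)) • b (H (m + n)) ∧
    ⁅b (L m), b (I n)⁆ = ((m - n : ℤ) : ℂ) • b (I (m + n)) ∧
    ⁅b (L m), b (J n)⁆ = ((m - n : ℤ) : ℂ) • b (J (m + n)) ∧
    ⁅b (H m), b (I n)⁆ = b (J (m + n)) ∧
    ⁅b (H m), b (J n)⁆ = -b (I (m + n)) ∧
    ⁅b (H m), b (H n)⁆ = 0 ∧
    ⁅b (I m), b (I n)⁆ = 0 ∧
    ⁅b (I m), b (J n)⁆ = 0 ∧
    ⁅b (J m), b (J n)⁆ = 0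

/-- `φ` is a ½-derivation. -/
def IsHalfDerivation {W : Type*} [LieRing W] [LieAlgebra ℂ W]
    (φ : W →ₗ[ℂ] W) : Prop :=
  ∀ x y : W, φ ⁅x, y⁆ = (2 : ℂ)⁻¹ • (⁅φ x, y⁆ + ⁅x, φ y⁆)

/-!
Write `D (L m) = a m • J (m + γ)` and `D (H m) = e m • I (m + γ)`. Applying `D` to
`⁅L m, H n⁆ = -n • H (m + n)` gives `-2n e (m + n) = a m + (m - n - γ) e n` for all `m n`,
and this linear system over `ℤ × ℤ` forces `a = e = 0`. Independently, `J k = ⁅H k, I 0⁆`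
is sent to `0` because `⁅I, I⁆ = ⁅H, H⁆ = 0`, and then `I k = -⁅H k, J 0⁆` is sent to `0`
because `⁅I, J⁆ = 0`.
-/

open PGIdx

namespace IsPlanarGCA

variable {W : Type*} [LieRing W] [LieAlgebra ℂ W] {b : Module.Basis PGIdx ℂ W}
  (hW : IsPlanarGCA W b)
include hW

theorem lie_L_H (m n : ℤ) : ⁅b (L m), b (H n)⁆ = (-(n : ℂ)) • b (H (m + n)) := (hW m n).2.1

theorem lie_L_I (m n : ℤ) : ⁅b (L m), b (I n)⁆ = ((m - n : ℤ) : ℂ) • b (I (m + n)) :=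
  (hW m n).2.2.1

theorem lie_H_I (m n : ℤ) : ⁅b (H m), b (I n)⁆ = b (J (m + n)) := (hW m n).2.2.2.2.1

theorem lie_H_J (m n : ℤ) : ⁅b (H m), b (J n)⁆ = -b (I (m + n)) := (hW m n).2.2.2.2.2.1

theorem lie_H_H (m n : ℤ) : ⁅b (H m), b (H n)⁆ = 0 := (hW m n).2.2.2.2.2.2.1

theorem lie_I_I (m n : ℤ) : ⁅b (I m), b (I n)⁆ = 0 := (hW m n).2.2.2.2.2.2.2.1

theorem lie_I_J (m n : ℤ) : ⁅b (I m), b (J n)⁆ = 0 := (hW m n).2.2.2.2.2.2.2.2.1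

theorem lie_J_H (m n : ℤ) : ⁅b (J m), b (H n)⁆ = b (I (n + m)) := by
  rw [← lie_skew, hW.lie_H_J, neg_neg]

end IsPlanarGCA

theorem eq_zero_of_coeff_relation {γ : ℤ} {a e : ℤ → ℂ}
    (h : ∀ m n : ℤ, -2 * (n : ℂ) * e (m + n) = a m + ((m : ℂ) - n - γ) * e n) :
    a = 0 ∧ e = 0 := by
  have h_zero : ∀ n, ((γ : ℂ) - n) * e n = a 0 := fun n => by
    have := h 0 n
    simp only [zero_add, Int.cast_zero] at this
    linear_combination this
  have ha_zero : a 0 = 0 := by simpa using (h_zero γ).symm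
  have he_ne : ∀ n ≠ γ, e n = 0 := fun n hn =>
    (mul_eq_zero.1 ((h_zero n).trans ha_zero)).resolve_left
      (sub_ne_zero.2 (by exact_mod_cast hn.symm))
  have ha : ∀ m, a m = 0 := fun m => by
    obtain ⟨n, hn⟩ := Infinite.exists_notMem_finset ({γ, γ - m} : Finset ℤ)
    simp only [Finset.mem_insert, Finset.mem_singleton, not_or] at hn
    have := h m n
    rw [he_ne n hn.1, he_ne (m + n) (by omega)] at this
    linear_combination -this
  have he_γ : e γ = 0 := by
    have := h (2 * γ + 1) γ
    rw [ha, he_ne (2 * γ + 1 + γ) (by omega)] at this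
    push_cast at this
    linear_combination -this
  refine ⟨funext ha, funext fun n => ?_⟩
  obtain rfl | hn := eq_or_ne n γ
  exacts [he_γ, he_ne n hn]

namespace IsHalfDerivation

variable {W : Type*} [LieRing W] [LieAlgebra ℂ W] {b : Module.Basis PGIdx ℂ W}
  {D : W →ₗ[ℂ] W} {γ : ℤ} {e : ℤ → ℂ}

theorem coeff_relation (hD : IsHalfDerivation D) (hW : IsPlanarGCA W b) {a : ℤ → ℂ}
    (ha : ∀ m, D (b (L m)) = a m • b (J (m + γ)))
    (he : ∀ m, D (b (H m)) = e m • b (I (m + γ))) (m n : ℤ) :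
    -2 * (n : ℂ) * e (m + n) = a m + ((m : ℂ) - n - γ) * e n := by
  have key := hD (b (L m)) (b (H n))
  rw [hW.lie_L_H, map_smul, he, ha, he, smul_lie, lie_smul, hW.lie_J_H, hW.lie_L_I,
    show n + (m + γ) = m + n + γ by ring, show m + (n + γ) = m + n + γ by ring] at key
  simp only [smul_smul, ← add_smul] at key
  have := smul_left_injective ℂ (b.ne_zero _) key
  push_cast at this
  linear_combination 2 * this

theorem apply_J_eq_zero (hD : IsHalfDerivation D) (hW : IsPlanarGCA W b)
    (he : ∀ m, D (b (H m)) = e m • b (I (m + γ)))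
    (hI : ∀ m, ∃ c : ℂ, D (b (I m)) = c • b (H (m + γ))) (k : ℤ) :
    D (b (J k)) = 0 := by
  obtain ⟨c, hc⟩ := hI 0
  rw [← add_zero k, ← hW.lie_H_I, hD, he, hc, smul_lie, lie_smul, hW.lie_I_I, hW.lie_H_H,
    smul_zero, smul_zero, add_zero, smul_zero]

theorem apply_I_eq_zero (hD : IsHalfDerivation D) (hW : IsPlanarGCA W b)
    (he : ∀ m, D (b (H m)) = e m • b (I (m + γ))) (hJ : ∀ m, D (b (J m)) = 0) (k : ℤ) :
    D (b (I k)) = 0 := by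
  rw [← neg_eq_zero, ← map_neg, ← add_zero k, ← hW.lie_H_J, hD, he, hJ, smul_lie,
    hW.lie_I_J, lie_zero, smul_zero, add_zero, smul_zero]

end IsHalfDerivation

open PGIdx in
theorem homogeneous_half_derivation_deg10_is_zero_general
    (W : Type*) [LieRing W] [LieAlgebra ℂ W]
    (b : Module.Basis PGIdx ℂ W) (hW : IsPlanarGCA W b)
    (γ : ℤ)
    (D : W →ₗ[ℂ] W) (hD : IsHalfDerivation D)
    (hL : ∀ m : ℤ, ∃ c : ℂ, D (b (L m)) = c • b (J (m + γ)))
    (hH : ∀ m : ℤ, ∃ c : ℂ, D (b (H m)) = c • b (I (m + γ)))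
    (hI : ∀ m : ℤ, ∃ c : ℂ, D (b (I m)) = c • b (H (m + γ))) :
    D = 0 := by
  choose a ha using hL
  choose e he using hH
  obtain ⟨rfl, rfl⟩ := eq_zero_of_coeff_relation (hD.coeff_relation hW ha he)
  have hJ₀ := hD.apply_J_eq_zero hW he hI
  have hI₀ := hD.apply_I_eq_zero hW he hJ₀
  refine b.ext fun i => ?_
  cases i with
  | L m => simp [ha]
  | H m => simp [he]
  | I m => simp [hI₀]
  | J m => simp [hJ₀]

open PGIdx in
theorem homogeneous_half_derivation_deg10_is_zero
    (W : Type*) [LieRing W] [LieAlgebra ℂ W]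
    (b : Module.Basis PGIdx ℂ W) (hW : IsPlanarGCA W b)
    (γ : ℤ)
    (D : W →ₗ[ℂ] W) (hD : IsHalfDerivation D)
    (hL : ∀ m : ℤ, ∃ c : ℂ, D (b (L m)) = c • b (J (m + γ)))
    (hH : ∀ m : ℤ, ∃ c : ℂ, D (b (H m)) = c • b (I (m + γ)))
    (hI : ∀ m : ℤ, ∃ c : ℂ, D (b (I m)) = c • b (H (m + γ)))
    (hJ : ∀ m : ℤ, ∃ c : ℂ, D (b (J m)) = c • b (L (m + γ))) :
    D = 0 :=
  homogeneous_half_derivation_deg10_is_zero_general W b hW γ D hD hL hH hI
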